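/- Let k be a field of characteristic p, A = k[x]/(x^{p^r}) with x primitive. Then as an algebra, A* ≅ ⨂_{i=0}^{r−1} k[y_i]/(y_i^p), where y_i = x^{p^i *}; in particular, (x^{p^i *})^p = 0 and the elements x^{p^i *}, 0 ≤ i ≤ r−1, generate A* as an algebra with x^{i*} expressible via the products determined by the base-p digits of i. -/

import Mathlib

/-!
Lucas' theorem does all the work. It gives `C((d+1)pʲ, dpʲ) ≡ d+1 (mod p)`, so
`e(pʲ)ᵈ = d! • e(dpʲ)`; for `d = p` the factorial vanishes, and for a digit `d < p` it is a unit.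
Adding the base-`p` digit terms `nⱼpʲ` of `n` involves no carries, so Lucas makes every binomial
coefficient in `∏ⱼ e(nⱼpʲ)` equal to `1` and the product is `e n`. Since the `e n` form a basis,
the `e(pʲ)` generate.
-/

open Finset
open scoped Nat

theorem Nat.choose_add_mul_pow_self_modEq_one {p : ℕ} [Fact p.Prime] :
    ∀ {j m : ℕ} (d : ℕ), m < p ^ j → Nat.choose (m + d * p ^ j) m ≡ 1 [MOD p]
  | 0, m, d, hm => by
    obtain rfl : m = 0 := by simpa using hm
    simp [Nat.ModEq.refl]
  | j + 1, m, d, hm => by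
    have hp := (Fact.out : p.Prime).pos
    have hmod : (m + d * p ^ (j + 1)) % p = m % p := by
      rw [pow_succ, ← mul_assoc, Nat.add_mul_mod_self_right]
    have hdiv : (m + d * p ^ (j + 1)) / p = m / p + d * p ^ j := by
      rw [pow_succ, ← mul_assoc, Nat.add_mul_div_right _ _ hp]
    have hlt : m / p < p ^ j := by rwa [Nat.div_lt_iff_lt_mul hp, ← pow_succ]
    calc Nat.choose (m + d * p ^ (j + 1)) m
        ≡ Nat.choose ((m + d * p ^ (j + 1)) % p) (m % p) *
            Nat.choose ((m + d * p ^ (j + 1)) / p) (m / p) [MOD p] :=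
          Choose.choose_modEq_choose_mod_mul_choose_div_nat
      _ = Nat.choose (m / p + d * p ^ j) (m / p) := by rw [hmod, hdiv, Nat.choose_self, one_mul]
      _ ≡ 1 [MOD p] := choose_add_mul_pow_self_modEq_one d hlt

section DividedPowerFamily

variable {k B : Type*} [CommSemiring k] [CommSemiring B] [Algebra k B] {p : ℕ} [Fact p.Prime]
  [CharP k p] {e : ℕ → B}

theorem pow_eq_factorial_smul_of_charP (he0 : e 0 = 1)
    (hmul : ∀ a c : ℕ, e a * e c = (Nat.choose (a + c) a : k) • e (a + c)) (j d : ℕ) :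
    e (p ^ j) ^ d = (d ! : k) • e (d * p ^ j) := by
  induction d with
  | zero => simp [he0]
  | succ d ih =>
    have hchoose : (Nat.choose (d * p ^ j + p ^ j) (d * p ^ j) : k) = (d + 1 : ℕ) := by
      apply CharP.natCast_eq_natCast' k p
      have h :=
        Choose.choose_pow_mul_pow_mul_modEq_choose_nat (p := p) (k := j) (a := d + 1) (b := d)
      rwa [Nat.choose_succ_self_right, mul_comm, Nat.add_one_mul, mul_comm (p ^ j) d] at h
    rw [pow_succ, ih, smul_mul_assoc, hmul, smul_smul, hchoose, ← Nat.add_one_mul,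
      Nat.factorial_succ, Nat.cast_mul, mul_comm]

theorem pow_prime_eq_zero_of_charP (he0 : e 0 = 1)
    (hmul : ∀ a c : ℕ, e a * e c = (Nat.choose (a + c) a : k) • e (a + c)) (j : ℕ) :
    e (p ^ j) ^ p = 0 := by
  have hp := (Fact.out : p.Prime).pos
  rw [pow_eq_factorial_smul_of_charP he0 hmul,
    (CharP.cast_eq_zero_iff k p _).2 (Nat.dvd_factorial hp le_rfl), zero_smul]

theorem prod_digit_mul_pow_eq_mod_pow_of_charP (he0 : e 0 = 1)
    (hmul : ∀ a c : ℕ, e a * e c = (Nat.choose (a + c) a : k) • e (a + c)) (n m : ℕ) :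
    ∏ j ∈ range m, e (n / p ^ j % p * p ^ j) = e (n % p ^ m) := by
  have hp := (Fact.out : p.Prime).pos
  induction m with
  | zero => simp [he0, Nat.mod_one]
  | succ m ih =>
    have hlt : n % p ^ m < p ^ m := Nat.mod_lt _ (pow_pos hp m)
    have hchoose : (Nat.choose (n % p ^ m + n / p ^ m % p * p ^ m) (n % p ^ m) : k) = 1 := by
      exact_mod_cast CharP.natCast_eq_natCast' k p
        (Nat.choose_add_mul_pow_self_modEq_one (n / p ^ m % p) hlt)
    have hsplit : n % p ^ m + n / p ^ m % p * p ^ m = n % p ^ (m + 1) := by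
      rw [Nat.mod_pow_succ, mul_comm]
    rw [prod_range_succ, ih, hmul, hchoose, one_smul, hsplit]

theorem prod_pow_digit_eq_smul_of_charP (he0 : e 0 = 1)
    (hmul : ∀ a c : ℕ, e a * e c = (Nat.choose (a + c) a : k) • e (a + c)) (n r : ℕ) :
    ∏ j ∈ range r, e (p ^ j) ^ (n / p ^ j % p) =
      (∏ j ∈ range r, ((n / p ^ j % p)! : k)) • e (n % p ^ r) := by
  simp only [pow_eq_factorial_smul_of_charP he0 hmul]
  rw [prod_smul, prod_digit_mul_pow_eq_mod_pow_of_charP he0 hmul]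

end DividedPowerFamily

theorem eq_inv_prod_factorial_smul_prod_pow_digits_of_charP {k B : Type*} [Field k]
    [CommSemiring B] [Algebra k B] {p : ℕ} [hp : Fact p.Prime] [CharP k p] {e : ℕ → B}
    (he0 : e 0 = 1) (hmul : ∀ a c : ℕ, e a * e c = (Nat.choose (a + c) a : k) • e (a + c))
    {n r : ℕ} (hn : n < p ^ r) :
    e n = (∏ j ∈ range r, (((Nat.digits p n).getD j 0)! : k))⁻¹ •
      ∏ j ∈ range r, e (p ^ j) ^ (Nat.digits p n).getD j 0 := by
  have hfactorial : ∀ j ∈ range r, ((n / p ^ j % p)! : k) ≠ 0 := fun j _ => by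
    rw [Ne, CharP.cast_eq_zero_iff k p, hp.out.dvd_factorial, not_le]
    exact Nat.mod_lt _ hp.out.pos
  simp only [Nat.getD_digits _ _ hp.out.two_le]
  rw [prod_pow_digit_eq_smul_of_charP he0 hmul, Nat.mod_eq_of_lt hn,
    inv_smul_smul₀ (prod_ne_zero_iff.2 hfactorial)]

theorem stmt15_general (k : Type*) [Field k] (p r : ℕ) (hp : p.Prime) [CharP k p]
    (B : Type*) [CommRing B] [Algebra k B]
    (b : Module.Basis (Fin (p ^ r)) k B)
    (e : ℕ → B) (he : ∀ n : ℕ, e n = if h : n < p ^ r then b ⟨n, h⟩ else 0)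
    (he0 : e 0 = 1)
    (hmul : ∀ a c : ℕ, e a * e c = (Nat.choose (a + c) a : k) • e (a + c)) :
    (∀ i : ℕ, i < r → e (p ^ i) ^ p = 0) ∧
    (∀ n : ℕ, n < p ^ r →
      e n = (∏ j ∈ Finset.range r, (((Nat.digits p n).getD j 0).factorial : k))⁻¹ •
        ∏ j ∈ Finset.range r, e (p ^ j) ^ ((Nat.digits p n).getD j 0)) ∧
    Algebra.adjoin k (Set.range fun i : Fin r => e (p ^ (i : ℕ))) = ⊤ := by
  have := Fact.mk hp
  have hdigits := fun n (hn : n < p ^ r) =>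
    eq_inv_prod_factorial_smul_prod_pow_digits_of_charP (k := k) he0 hmul hn
  refine ⟨fun i _ => pow_prime_eq_zero_of_charP he0 hmul i, hdigits, ?_⟩
  have hbasis (i : Fin (p ^ r)) :
      b i ∈ Algebra.adjoin k (Set.range fun i : Fin r => e (p ^ (i : ℕ))) := by
    rw [show b i = e i by rw [he, dif_pos i.isLt], hdigits i i.isLt]
    refine Subalgebra.smul_mem _ ?_ _
    refine prod_mem fun j hj => pow_mem ?_ _
    exact Algebra.subset_adjoin ⟨⟨j, mem_range.1 hj⟩, rfl⟩
  exact eq_top_iff.2 fun x _ => (Subalgebra.mem_toSubmodule _).1 <|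
    Submodule.span_le.2 (Set.range_subset_iff.2 hbasis) (b.mem_span x)

/-- let `A = k[x]/(x^{p^r})` with `x` primitive, over a field `k` of
characteristic `p`.  Its dual algebra `A*` has basis `x^{i*}` (`i < p^r`, here the family
`e`), with multiplication `x^{a*} · x^{b*} = C(a+b, a) x^{(a+b)*}` (where `x^{m*} = 0` for
`m ≥ p^r`).  Then `A* ≅ ⨂_{i=0}^{r-1} k[yᵢ]/(yᵢ^p)` with `yᵢ = x^{pⁱ*}`: in particular
`(x^{pⁱ*})^p = 0`, the elements `x^{pⁱ*}` generate `A*` as an algebra, and `x^{i*}` is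
expressible as the product determined by the base-`p` digits of `i`. -/
theorem stmt15 (k : Type*) [Field k] (p r : ℕ) (hp : p.Prime) [CharP k p] (hr : 0 < r)
    (B : Type*) [CommRing B] [Algebra k B]
    (b : Module.Basis (Fin (p ^ r)) k B)
    (e : ℕ → B) (he : ∀ n : ℕ, e n = if h : n < p ^ r then b ⟨n, h⟩ else 0)
    (he0 : e 0 = 1)
    (hmul : ∀ a c : ℕ, e a * e c = (Nat.choose (a + c) a : k) • e (a + c)) :
    (∀ i : ℕ, i < r → e (p ^ i) ^ p = 0) ∧
    (∀ n : ℕ, n < p ^ r →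
      e n = (∏ j ∈ Finset.range r, (((Nat.digits p n).getD j 0).factorial : k))⁻¹ •
        ∏ j ∈ Finset.range r, e (p ^ j) ^ ((Nat.digits p n).getD j 0)) ∧
    Algebra.adjoin k (Set.range fun i : Fin r => e (p ^ (i : ℕ))) = ⊤ :=
  stmt15_general k p r hp B b e he he0 hmul
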